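/- arXiv:2005.13805 — 2 statements merged into one kernel-verified Lean document; each statement's English description precedes it below -/
import Mathlib

section
/- Fix t ∈ Ω. Under conditions C1–C6, the single-observation variance of the first proposed survival function estimator, namely n · Var[S̃_{X,1}(t)] = E[V_{1,h}(g⁻¹(t), g⁻¹(X))²] − (E[V_{1,h}(g⁻¹(t), g⁻¹(X))])² where V_{1,h}(x, y) = (1/h) ∫_x^{∞} K((z − y)/h) dz, satisfies, as h → 0⁺: n · Var[S̃_{X,1}(t)] = S_X(t) F_X(t) − h g′(g⁻¹(t)) f_X(t) ∫_{−∞}^{∞} V(y) W(y) dy + o(h), where F_X = 1 − S_X. -/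
open MeasureTheory Filter Asymptotics

/-- `V x = ∫_x^∞ K(z) dz`. -/
noncomputable def kerV (K : ℝ → ℝ) (x : ℝ) : ℝ := ∫ z in Set.Ioi x, K z

/-- `W x = ∫_{-∞}^x K(z) dz`. -/
noncomputable def kerW (K : ℝ → ℝ) (x : ℝ) : ℝ := ∫ z in Set.Iic x, K z

/-- The survival function of `X`: `S_X(t) = P(X > t)`. -/
noncomputable def survival {α : Type*} [MeasurableSpace α] (μ : Measure α)
    (X : α → ℝ) (t : ℝ) : ℝ := (μ {ω | t < X ω}).toReal

/-- The cumulative survival function of `X`: `𝕊_X(t) = ∫_t^∞ S_X(x) dx`. -/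
noncomputable def cumSurvival {α : Type*} [MeasurableSpace α] (μ : Measure α)
    (X : α → ℝ) (t : ℝ) : ℝ := ∫ x in Set.Ioi t, survival μ X x

/-- `𝕊̄_X(t) = ∫_t^∞ 𝕊_X(x) dx`. -/
noncomputable def cumCumSurvival {α : Type*} [MeasurableSpace α] (μ : Measure α)
    (X : α → ℝ) (t : ℝ) : ℝ := ∫ x in Set.Ioi t, cumSurvival μ X x

/-!
Write `Y = g⁻¹(X)`, `x₀ = g⁻¹(t)` and `f_Y = g′ · f_X ∘ g` for the density of `Y`. A change of
variables turns the summand into `V((x₀ - Y)/h)`. Since `V + W = 1` we have `V² = V - V W`, and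
`1{Y > x₀} = 1{(x₀ - Y)/h < 0}`, so with `D = V - 1_{(-∞,0)}`
`E V((x₀-Y)/h) = S_X(t) + h ∫ h⁻¹ D((x₀-y)/h) f_Y(y) dy` and
`E V((x₀-Y)/h)² = E V((x₀-Y)/h) - h ∫ h⁻¹ (V W)((x₀-y)/h) f_Y(y) dy`.
By Chebyshev's inequality `|D(u)|, (V W)(u) ≤ V(|u|) = O(u⁻²)`, so both rescalings are peak
functions at `x₀` and the two integrals tend to `f_Y(x₀) ∫ D = 0` (`D` is odd) and
`f_Y(x₀) ∫ V W`. Expanding the variance gives the claim.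
-/

open Set Topology

section Peak

variable {φ Ψ g : ℝ → ℝ} {B M : ℝ}

lemma tendsto_abs_mul_cobounded_of_sq_mul_le (hφ0 : ∀ x, 0 ≤ φ x) (hM : ∀ x, x ^ 2 * φ x ≤ M) :
    Tendsto (fun x => |x| * φ x) (Bornology.cobounded ℝ) (𝓝 0) := by
  have hlim : Tendsto (fun x : ℝ => M * ‖x‖⁻¹) (Bornology.cobounded ℝ) (𝓝 0) := by
    simpa using (tendsto_norm_cobounded_atTop (E := ℝ)).inv_tendsto_atTop.const_mul M
  refine squeeze_zero' (.of_forall fun x => mul_nonneg (abs_nonneg x) (hφ0 x)) ?_ hlim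
  filter_upwards [(tendsto_norm_cobounded_atTop (E := ℝ)).eventually_gt_atTop 0] with x hx
  rw [Real.norm_eq_abs] at hx ⊢
  rw [le_mul_inv_iff₀ hx, mul_right_comm, ← sq, sq_abs]
  exact hM x

theorem tendsto_integral_inv_mul_comp_div_mul_of_nonneg (x₀ : ℝ) (hφ0 : ∀ x, 0 ≤ φ x)
    (hφ : Integrable φ) (hM : ∀ x, x ^ 2 * φ x ≤ M) (hg : Integrable g)
    (hgx₀ : ContinuousAt g x₀) :
    Tendsto (fun h => ∫ y, h⁻¹ * φ ((x₀ - y) / h) * g y) (𝓝[>] 0)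
      (𝓝 ((∫ x, φ x) * g x₀)) := by
  -- Mathlib's peak-function theorem wants `∫ φ = 1`; if `∫ φ = 0` then `φ = 0` a.e.
  rcases (integral_nonneg hφ0 : 0 ≤ ∫ x, φ x).eq_or_lt with hc | hc
  · rw [← hc, zero_mul]
    refine tendsto_const_nhds.congr' ?_
    filter_upwards [self_mem_nhdsWithin] with h (hh : 0 < h)
    have hzero : (fun y => φ ((x₀ - y) / h)) =ᵐ[volume] 0 := by
      refine (integral_eq_zero_iff_of_nonneg (fun y => hφ0 _)
        ((hφ.comp_div hh.ne').comp_sub_left x₀)).1 ?_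
      rw [integral_sub_left_eq_self (fun y => φ (y / h)), Measure.integral_comp_div, ← hc,
        smul_zero]
    refine (integral_eq_zero_of_ae ?_).symm
    filter_upwards [hzero] with y hy
    simp [hy]
  · have hdecay : Tendsto (fun x : ℝ => ‖x‖ ^ Module.finrank ℝ ℝ * (φ x / ∫ x, φ x))
        (Bornology.cobounded ℝ) (𝓝 0) := by
      simpa [mul_div_assoc] using (tendsto_abs_mul_cobounded_of_sq_mul_le hφ0 hM).div_const _
    have hpeak := tendsto_integral_comp_smul_smul_of_integrable' (μ := volume)
      (fun x => div_nonneg (hφ0 x) hc.le) (by rw [integral_div, div_self hc.ne']) hdecay hg hgx₀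
    refine ((hpeak.comp tendsto_inv_nhdsGT_zero).const_mul (∫ x, φ x)).congr' ?_
    filter_upwards [self_mem_nhdsWithin] with h hh
    simp only [Function.comp_apply, Module.finrank_self, pow_one, smul_eq_mul]
    rw [← integral_const_mul]
    congr 1 with y
    field_simp

lemma integrable_of_abs_le_of_sq_mul_abs_le (hΨ : AEStronglyMeasurable Ψ) (hB : ∀ x, |Ψ x| ≤ B)
    (hM : ∀ x, x ^ 2 * |Ψ x| ≤ M) : Integrable Ψ := by
  refine (integrable_inv_one_add_sq.const_mul (B + M)).mono' hΨ (.of_forall fun x => ?_)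
  rw [Real.norm_eq_abs, ← div_eq_mul_inv, le_div_iff₀ (by positivity)]
  linarith [hB x, hM x]

theorem tendsto_integral_inv_mul_comp_div_mul (x₀ : ℝ) (hΨ : Measurable Ψ) (hB : ∀ x, |Ψ x| ≤ B)
    (hM : ∀ x, x ^ 2 * |Ψ x| ≤ M) (hg : Integrable g) (hgx₀ : ContinuousAt g x₀) :
    Tendsto (fun h => ∫ y, h⁻¹ * Ψ ((x₀ - y) / h) * g y) (𝓝[>] 0)
      (𝓝 ((∫ x, Ψ x) * g x₀)) := by
  have hpart : ∀ ψ : ℝ → ℝ, Measurable ψ → (∀ x, 0 ≤ ψ x) → (∀ x, ψ x ≤ |Ψ x|) →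
      Integrable ψ ∧ (∀ h > 0, Integrable fun y => h⁻¹ * ψ ((x₀ - y) / h) * g y) ∧
      Tendsto (fun h => ∫ y, h⁻¹ * ψ ((x₀ - y) / h) * g y) (𝓝[>] 0)
        (𝓝 ((∫ x, ψ x) * g x₀)) := by
    intro ψ hψ hψ0 hψΨ
    have hψB : ∀ x, |ψ x| ≤ B := fun x =>
      ((abs_of_nonneg (hψ0 x)).trans_le (hψΨ x)).trans (hB x)
    have hψM : ∀ x, x ^ 2 * ψ x ≤ M := fun x =>
      (mul_le_mul_of_nonneg_left (hψΨ x) (sq_nonneg x)).trans (hM x)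
    have hψi := integrable_of_abs_le_of_sq_mul_abs_le hψ.aestronglyMeasurable hψB
      (fun x => by rw [abs_of_nonneg (hψ0 x)]; exact hψM x)
    refine ⟨hψi, fun h hh => hg.bdd_mul (c := h⁻¹ * B) ?_ (.of_forall fun y => ?_),
      tendsto_integral_inv_mul_comp_div_mul_of_nonneg x₀ hψ0 hψi hψM hg hgx₀⟩
    · exact (hψ.comp (by fun_prop)).const_mul _ |>.aestronglyMeasurable
    · rw [norm_mul, Real.norm_eq_abs, abs_of_pos (inv_pos.2 hh)]
      exact mul_le_mul_of_nonneg_left (hψB _) (inv_nonneg.2 hh.le)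
  have hsplit : ∀ a : ℝ, a = max a 0 - max (-a) 0 := fun a => (posPart_sub_negPart a).symm
  obtain ⟨hpi, hpi', hpt⟩ := hpart (fun x => max (Ψ x) 0) (hΨ.max measurable_const)
    (fun x => le_max_right _ _) (fun x => max_le (le_abs_self _) (abs_nonneg _))
  obtain ⟨hni, hni', hnt⟩ := hpart (fun x => max (-Ψ x) 0) (hΨ.neg.max measurable_const)
    (fun x => le_max_right _ _) (fun x => max_le (neg_le_abs _) (abs_nonneg _))
  have hlim : (∫ x, Ψ x) * g x₀
      = (∫ x, max (Ψ x) 0) * g x₀ - (∫ x, max (-Ψ x) 0) * g x₀ := by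
    rw [← sub_mul, ← integral_sub hpi hni]
    simp only [← hsplit]
  rw [hlim]
  refine (hpt.sub hnt).congr' ?_
  filter_upwards [self_mem_nhdsWithin] with h hh
  rw [← integral_sub (hpi' h hh) (hni' h hh)]
  congr 1 with y
  rw [← sub_mul, ← mul_sub, ← hsplit]

end Peak

lemma isLittleO_sub_sq_sub_of_tendsto {m s β γ : ℝ → ℝ} {S c : ℝ}
    (hm : ∀ h > 0, m h = S + h * β h) (hs : ∀ h > 0, s h = m h - h * γ h)
    (hβ : Tendsto β (𝓝[>] 0) (𝓝 0)) (hγ : Tendsto γ (𝓝[>] 0) (𝓝 c)) :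
    (fun h => s h - m h ^ 2 - (S * (1 - S) - h * c)) =o[𝓝[>] 0] fun h => h := by
  have hid : Tendsto (fun h : ℝ => h) (𝓝[>] 0) (𝓝 0) :=
    tendsto_nhdsWithin_of_tendsto_nhds tendsto_id
  have hrem : Tendsto (fun h => β h * (1 - 2 * S - h * β h) - (γ h - c)) (𝓝[>] 0) (𝓝 0) := by
    simpa using (hβ.mul (tendsto_const_nhds.sub (hid.mul hβ))).sub (hγ.sub_const c)
  refine (((isLittleO_one_iff ℝ).2 hrem).mul_isBigO (isBigO_refl (fun h : ℝ => h) _)).congr'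
    ?_ (.of_forall fun h => one_mul h)
  filter_upwards [self_mem_nhdsWithin] with h hh
  rw [hs h hh, hm h hh]
  ring

theorem integral_comp_leftInverse_eq_integral_mul_deriv_mul {α : Type*} [MeasurableSpace α]
    {μ : Measure α} {X : α → ℝ} {fX g gInv Ψ : ℝ → ℝ} (hX : Measurable X)
    (hfX : Measurable fX) (hfX0 : ∀ x, 0 ≤ fX x)
    (hdens : μ.map X = volume.withDensity (fun x => ENNReal.ofReal (fX x)))
    (hg : Differentiable ℝ g) (hg_mono : StrictMono g) (hXg : ∀ᵐ ω ∂μ, X ω ∈ range g)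
    (hgInv : Function.LeftInverse gInv g) (hgInv_meas : Measurable gInv) (hΨ : Measurable Ψ) :
    ∫ ω, Ψ (gInv (X ω)) ∂μ = ∫ y, Ψ y * (deriv g y * fX (g y)) := by
  have hrange : MeasurableSet (range g) :=
    (hg.continuous.measurableEmbedding hg_mono.injective).measurableSet_range
  have hconc : μ.map X = (μ.map X).restrict (range g) :=
    (Measure.restrict_eq_self_of_ae_mem ((ae_map_iff hX.aemeasurable hrange).2 hXg)).symm
  calc ∫ ω, Ψ (gInv (X ω)) ∂μ = ∫ x, Ψ (gInv x) ∂(μ.map X) :=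
        (integral_map hX.aemeasurable (hΨ.comp hgInv_meas).aestronglyMeasurable).symm
    _ = ∫ x in range g, fX x * Ψ (gInv x) := by
      rw [hconc, hdens, restrict_withDensity hrange,
        integral_withDensity_eq_integral_toReal_smul (by fun_prop)
          (.of_forall fun _ => ENNReal.ofReal_lt_top)]
      refine setIntegral_congr_fun hrange fun x _ => ?_
      simp [ENNReal.toReal_ofReal (hfX0 x)]
    _ = ∫ y, |deriv g y| * (fX (g y) * Ψ (gInv (g y))) := by
      rw [← image_univ, integral_image_eq_integral_abs_deriv_smul MeasurableSet.univ
        (fun y _ => (hg y).hasDerivAt.hasDerivWithinAt) hg_mono.injective.injOn,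
        setIntegral_univ]
      rfl
    _ = ∫ y, Ψ y * (deriv g y * fX (g y)) := by
      congr with y
      rw [hgInv y, abs_of_nonneg hg_mono.monotone.deriv_nonneg]
      ring

lemma survival_eq_measureReal_lt {α : Type*} [MeasurableSpace α] {μ : Measure α}
    {X : α → ℝ} {g gInv : ℝ → ℝ} (hg_mono : StrictMono g)
    (hXg : ∀ᵐ ω ∂μ, g (gInv (X ω)) = X ω) (x₀ : ℝ) :
    survival μ X (g x₀) = μ.real {ω | x₀ < gInv (X ω)} := by
  refine congrArg ENNReal.toReal (measure_congr (eventuallyEq_set.2 ?_))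
  filter_upwards [hXg] with ω hω
  show g x₀ < X ω ↔ x₀ < gInv (X ω)
  rw [← hω, hg_mono.lt_iff_lt, hω]

section Kernel

variable {K : ℝ → ℝ}

lemma kerV_add_kerW (hK : (∫ x, K x) = 1) (x : ℝ) : kerV K x + kerW K x = 1 := by
  rw [kerV, kerW, ← compl_Iic, add_comm,
    integral_add_compl measurableSet_Iic (integrable_of_integral_eq_one hK), hK]

lemma kerW_eq_kerV_neg (hK : ∀ x, K (-x) = K x) (x : ℝ) : kerW K x = kerV K (-x) := by
  simp only [kerV, ← integral_comp_neg_Iic, hK, kerW]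

lemma kerV_nonneg (hK : ∀ x, 0 ≤ K x) (x : ℝ) : 0 ≤ kerV K x :=
  setIntegral_nonneg measurableSet_Ioi fun z _ => hK z

lemma kerW_nonneg (hK : ∀ x, 0 ≤ K x) (x : ℝ) : 0 ≤ kerW K x :=
  setIntegral_nonneg measurableSet_Iic fun z _ => hK z

lemma kerV_le_one (hK0 : ∀ x, 0 ≤ K x) (hK1 : (∫ x, K x) = 1) (x : ℝ) : kerV K x ≤ 1 := by
  linarith [kerV_add_kerW hK1 x, kerW_nonneg hK0 x]

lemma kerW_le_one (hK0 : ∀ x, 0 ≤ K x) (hK1 : (∫ x, K x) = 1) (x : ℝ) : kerW K x ≤ 1 := by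
  linarith [kerV_add_kerW hK1 x, kerV_nonneg hK0 x]

lemma antitone_kerV (hK0 : ∀ x, 0 ≤ K x) (hK : Integrable K) : Antitone (kerV K) :=
  fun _ _ hxy => setIntegral_mono_set hK.integrableOn (.of_forall fun z => hK0 z)
    (Ioi_subset_Ioi hxy).eventuallyLE

lemma sq_mul_kerV_le (hK0 : ∀ x, 0 ≤ K x) (hK : Integrable K)
    (hmom : Integrable fun x => x ^ 2 * K x) {x : ℝ} (hx : 0 ≤ x) :
    x ^ 2 * kerV K x ≤ ∫ z, z ^ 2 * K z := by
  calc x ^ 2 * kerV K x = ∫ z in Ioi x, x ^ 2 * K z := (integral_const_mul _ _).symm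
    _ ≤ ∫ z in Ioi x, z ^ 2 * K z :=
      setIntegral_mono_on (hK.integrableOn.const_mul _) hmom.integrableOn measurableSet_Ioi
        fun z hz => mul_le_mul_of_nonneg_right (pow_le_pow_left₀ hx (le_of_lt hz) 2) (hK0 z)
    _ ≤ ∫ z, z ^ 2 * K z :=
      setIntegral_le_integral hmom (.of_forall fun z => mul_nonneg (sq_nonneg z) (hK0 z))

lemma kerV_add_kerV_neg (hK1 : (∫ x, K x) = 1) (hKs : ∀ x, K (-x) = K x) (x : ℝ) :
    kerV K x + kerV K (-x) = 1 := by
  rw [← kerW_eq_kerV_neg hKs, kerV_add_kerW hK1]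

lemma measurable_kerV (hK0 : ∀ x, 0 ≤ K x) (hK1 : (∫ x, K x) = 1) : Measurable (kerV K) :=
  (antitone_kerV hK0 (integrable_of_integral_eq_one hK1)).measurable

noncomputable def kerD (K : ℝ → ℝ) (u : ℝ) : ℝ := kerV K u - (Iio 0).indicator 1 u

lemma measurable_kerW (hK0 : ∀ x, 0 ≤ K x) (hK1 : (∫ x, K x) = 1) : Measurable (kerW K) := by
  have : kerW K = fun x => 1 - kerV K x := funext fun x => by linarith [kerV_add_kerW hK1 x]
  exact this ▸ measurable_const.sub (measurable_kerV hK0 hK1)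

lemma measurable_kerD (hK0 : ∀ x, 0 ≤ K x) (hK1 : (∫ x, K x) = 1) : Measurable (kerD K) :=
  (measurable_kerV hK0 hK1).sub (measurable_const.indicator measurableSet_Iio)

variable (hK0 : ∀ x, 0 ≤ K x) (hK1 : (∫ x, K x) = 1) (hKs : ∀ x, K (-x) = K x)
include hK1 hKs

lemma kerD_of_neg {u : ℝ} (hu : u < 0) : kerD K u = -kerV K (-u) := by
  rw [kerD, indicator_of_mem (mem_Iio.2 hu), Pi.one_apply]
  linarith [kerV_add_kerV_neg hK1 hKs u]

lemma kerD_neg {u : ℝ} (hu : u ≠ 0) : kerD K (-u) = -kerD K u := by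
  rcases hu.lt_or_gt with hu | hu
  · rw [kerD_of_neg hK1 hKs hu, kerD, indicator_of_notMem (by simpa using hu.le)]
    simp
  · rw [kerD_of_neg hK1 hKs (neg_neg_of_pos hu), neg_neg, kerD,
      indicator_of_notMem (by simpa using hu.le), sub_zero]

lemma integral_kerD : ∫ u, kerD K u = 0 := by
  have hodd : (fun u => kerD K (-u)) =ᵐ[volume] fun u => -kerD K u := by
    filter_upwards [measure_singleton (0 : ℝ) |> compl_mem_ae_iff.2] with u hu
    exact kerD_neg hK1 hKs hu
  have := integral_neg_eq_self (kerD K) volume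
  rw [integral_congr_ae hodd, integral_neg] at this
  linarith

include hK0 in
lemma abs_kerD (u : ℝ) : |kerD K u| = kerV K |u| := by
  rcases lt_or_ge u 0 with hu | hu
  · rw [kerD_of_neg hK1 hKs hu, abs_neg, abs_of_neg hu, abs_of_nonneg (kerV_nonneg hK0 _)]
  · rw [kerD, indicator_of_notMem (by simpa using hu), sub_zero, abs_of_nonneg hu,
      abs_of_nonneg (kerV_nonneg hK0 _)]

include hK0 in
lemma kerV_mul_kerW_le (u : ℝ) : kerV K u * kerW K u ≤ kerV K |u| := by
  rw [kerW_eq_kerV_neg hKs]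
  have h0 := kerV_nonneg hK0
  have h1 := kerV_le_one hK0 hK1
  rcases le_total 0 u with hu | hu
  · rw [abs_of_nonneg hu]
    exact mul_le_of_le_one_right (h0 u) (h1 _)
  · rw [abs_of_nonpos hu]
    exact mul_le_of_le_one_left (h0 _) (h1 u)

end Kernel

lemma one_div_mul_integral_Ioi_comp_sub_div (K : ℝ → ℝ) (a y : ℝ) {h : ℝ} (hh : 0 < h) :
    (1 / h) * ∫ z in Ioi a, K ((z - y) / h) = kerV K ((a - y) / h) := by
  have hshift : ∫ z in Ioi a, K ((z - y) / h) = ∫ w in Ioi (a - y), K (h⁻¹ * w) := by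
    have := (measurePreserving_sub_right volume y).setIntegral_preimage_emb
      (measurableEmbedding_subRight y) (fun w => K (h⁻¹ * w)) (Ioi (a - y))
    rw [preimage_sub_const_Ioi, sub_add_cancel] at this
    simpa only [div_eq_inv_mul] using this
  rw [hshift, integral_comp_mul_left_Ioi _ _ (inv_pos.2 hh), inv_inv, smul_eq_mul, kerV,
    div_eq_inv_mul (a - y), one_div, ← mul_assoc, inv_mul_cancel₀ hh.ne', one_mul]

section Moments

variable {α : Type*} [MeasurableSpace α] {μ : Measure α} {K : ℝ → ℝ} {Y : α → ℝ}
  {fY : ℝ → ℝ} {x₀ h : ℝ}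

lemma integral_comp_sub_div_eq_mul_integral
    (hlaw : ∀ Ψ : ℝ → ℝ, Measurable Ψ → ∫ ω, Ψ (Y ω) ∂μ = ∫ y, Ψ y * fY y)
    {Ψ : ℝ → ℝ} (hΨ : Measurable Ψ) (hh : h ≠ 0) :
    ∫ ω, Ψ ((x₀ - Y ω) / h) ∂μ = h * ∫ y, h⁻¹ * Ψ ((x₀ - y) / h) * fY y := by
  rw [hlaw (fun y => Ψ ((x₀ - y) / h)) (hΨ.comp ((measurable_const.sub measurable_id).div_const h)),
    ← integral_const_mul]
  congr with y
  field_simp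

variable [IsProbabilityMeasure μ] (hK0 : ∀ x, 0 ≤ K x) (hK1 : (∫ x, K x) = 1)
  (hY : Measurable Y) (hlaw : ∀ Ψ : ℝ → ℝ, Measurable Ψ → ∫ ω, Ψ (Y ω) ∂μ = ∫ y, Ψ y * fY y)
include hK0 hK1 hY

lemma integrable_kerV_comp : Integrable (fun ω => kerV K ((x₀ - Y ω) / h)) μ := by
  refine .of_bound (((measurable_kerV hK0 hK1).comp
    ((measurable_const.sub hY).div_const h)).aestronglyMeasurable) 1 (.of_forall fun ω => ?_)
  rw [Real.norm_eq_abs, abs_of_nonneg (kerV_nonneg hK0 _)]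
  exact kerV_le_one hK0 hK1 _

include hlaw

lemma integral_kerV_comp_sub_div (hh : 0 < h) :
    ∫ ω, kerV K ((x₀ - Y ω) / h) ∂μ
      = μ.real {ω | x₀ < Y ω} + h * ∫ y, h⁻¹ * kerD K ((x₀ - y) / h) * fY y := by
  have hset : MeasurableSet {ω | x₀ < Y ω} := measurableSet_lt measurable_const hY
  have hstep : ∀ ω, (Iio (0 : ℝ)).indicator (1 : ℝ → ℝ) ((x₀ - Y ω) / h)
      = {ω | x₀ < Y ω}.indicator (1 : α → ℝ) ω := by
    intro ω
    have hiff : (x₀ - Y ω) / h < 0 ↔ x₀ < Y ω := by rw [div_lt_iff₀ hh, zero_mul, sub_neg]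
    simp only [indicator_apply, mem_Iio, mem_ofPred_eq, hiff, Pi.one_apply]
  have hD : ∫ ω, kerD K ((x₀ - Y ω) / h) ∂μ
      = ∫ ω, kerV K ((x₀ - Y ω) / h) ∂μ - μ.real {ω | x₀ < Y ω} := by
    rw [← integral_indicator_one hset,
      ← integral_sub (integrable_kerV_comp hK0 hK1 hY)
        (show Integrable ({ω | x₀ < Y ω}.indicator (1 : α → ℝ)) μ from
          (integrable_const 1).indicator hset)]
    simp only [kerD, hstep]
  rw [← integral_comp_sub_div_eq_mul_integral hlaw (measurable_kerD hK0 hK1) hh.ne', hD]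
  ring

lemma integral_kerV_sq_comp_sub_div (hh : 0 < h) :
    ∫ ω, kerV K ((x₀ - Y ω) / h) ^ 2 ∂μ
      = ∫ ω, kerV K ((x₀ - Y ω) / h) ∂μ
        - h * ∫ y, h⁻¹ * (kerV K ((x₀ - y) / h) * kerW K ((x₀ - y) / h)) * fY y := by
  have hu : Measurable fun ω => (x₀ - Y ω) / h := (measurable_const.sub hY).div_const h
  have hVW : Integrable (fun ω => kerV K ((x₀ - Y ω) / h) * kerW K ((x₀ - Y ω) / h)) μ := by
    refine (integrable_kerV_comp hK0 hK1 hY).mul_bdd (c := 1)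
      ((measurable_kerW hK0 hK1).comp hu).aestronglyMeasurable (.of_forall fun ω => ?_)
    rw [Real.norm_eq_abs, abs_of_nonneg (kerW_nonneg hK0 _)]
    exact kerW_le_one hK0 hK1 _
  rw [← integral_comp_sub_div_eq_mul_integral (Ψ := fun u => kerV K u * kerW K u) hlaw
      ((measurable_kerV hK0 hK1).mul (measurable_kerW hK0 hK1)) hh.ne',
    ← integral_sub (integrable_kerV_comp hK0 hK1 hY) hVW]
  congr with ω
  linear_combination kerV K ((x₀ - Y ω) / h) * kerV_add_kerW hK1 ((x₀ - Y ω) / h)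

end Moments

section KernelLimits

variable {K g : ℝ → ℝ} (x₀ : ℝ) (hK0 : ∀ x, 0 ≤ K x) (hK1 : (∫ x, K x) = 1)
  (hmom : Integrable fun x => x ^ 2 * K x) (hg : Integrable g) (hgx₀ : ContinuousAt g x₀)
include hK0 hK1 hmom hg hgx₀

lemma tendsto_integral_inv_mul_comp_div_mul_of_abs_le_kerV {Ψ : ℝ → ℝ} (hΨ : Measurable Ψ)
    (hΨK : ∀ u, |Ψ u| ≤ kerV K |u|) :
    Tendsto (fun h => ∫ y, h⁻¹ * Ψ ((x₀ - y) / h) * g y) (𝓝[>] 0)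
      (𝓝 ((∫ x, Ψ x) * g x₀)) := by
  refine tendsto_integral_inv_mul_comp_div_mul (M := ∫ z, z ^ 2 * K z) x₀ hΨ
    (fun u => (hΨK u).trans (kerV_le_one hK0 hK1 _)) (fun u => ?_) hg hgx₀
  calc u ^ 2 * |Ψ u| ≤ |u| ^ 2 * kerV K |u| := by
        rw [sq_abs]; exact mul_le_mul_of_nonneg_left (hΨK u) (sq_nonneg u)
    _ ≤ ∫ z, z ^ 2 * K z :=
        sq_mul_kerV_le hK0 (integrable_of_integral_eq_one hK1) hmom (abs_nonneg u)

variable (hKs : ∀ x, K (-x) = K x)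
include hKs

lemma tendsto_integral_inv_mul_kerD_comp_div_mul :
    Tendsto (fun h => ∫ y, h⁻¹ * kerD K ((x₀ - y) / h) * g y) (𝓝[>] 0) (𝓝 0) := by
  simpa [integral_kerD hK1 hKs] using
    tendsto_integral_inv_mul_comp_div_mul_of_abs_le_kerV x₀ hK0 hK1 hmom hg hgx₀
      (measurable_kerD hK0 hK1) fun u => (abs_kerD hK0 hK1 hKs u).le

lemma tendsto_integral_inv_mul_kerV_mul_kerW_comp_div_mul :
    Tendsto (fun h => ∫ y, h⁻¹ * (kerV K ((x₀ - y) / h) * kerW K ((x₀ - y) / h)) * g y)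
      (𝓝[>] 0) (𝓝 ((∫ u, kerV K u * kerW K u) * g x₀)) :=
  tendsto_integral_inv_mul_comp_div_mul_of_abs_le_kerV (Ψ := fun u => kerV K u * kerW K u)
    x₀ hK0 hK1 hmom hg hgx₀ ((measurable_kerV hK0 hK1).mul (measurable_kerW hK0 hK1))
    fun u => (abs_of_nonneg (mul_nonneg (kerV_nonneg hK0 u) (kerW_nonneg hK0 u))).trans_le
      (kerV_mul_kerW_le hK0 hK1 hKs u)

end KernelLimits

theorem var_survival_estimator_one_general
    {α : Type*} [MeasurableSpace α] (μ : Measure α) [IsProbabilityMeasure μ]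
    -- C1: the kernel
    (K : ℝ → ℝ) (hK_nonneg : ∀ x, 0 ≤ K x)
    (hK_symm : ∀ x, K (-x) = K x) (hK_one : (∫ x, K x) = 1)
    (hK_mom2 : Integrable (fun x => x ^ 2 * K x))
    -- C3, C4: the transformation
    (Ω : Set ℝ)
    (g gInv fX : ℝ → ℝ)
    (hg_smooth : ContDiff ℝ 2 g) (hg_mono : StrictMono g)
    (hg_range : Set.range g = Ω)
    (hgInv_left : Function.LeftInverse gInv g)
    (hgInv_right : ∀ s ∈ Ω, g (gInv s) = s)
    (hgInv_meas : Measurable gInv)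
    -- the random variable and its density
    (X : α → ℝ) (hX : Measurable X) (hXΩ : ∀ᵐ ω ∂μ, X ω ∈ Ω)
    (hfX_smooth : ContDiff ℝ 2 fX) (hfX_nonneg : ∀ x, 0 ≤ fX x)
    (hdens : μ.map X = volume.withDensity (fun x => ENNReal.ofReal (fX x)))
    -- the point of evaluation
    (t : ℝ) (ht : t ∈ Ω)
    :
    (fun h : ℝ =>
        (∫ ω, ((1 / h) *
            ∫ z in Set.Ioi (gInv t), K ((z - gInv (X ω)) / h)) ^ 2 ∂μ)
          - (∫ ω, (1 / h) *
              (∫ z in Set.Ioi (gInv t), K ((z - gInv (X ω)) / h)) ∂μ) ^ 2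
          - (survival μ X t * (1 - survival μ X t)
              - h * deriv g (gInv t) * fX t * ∫ y, kerV K y * kerW K y))
      =o[nhdsWithin (0 : ℝ) (Set.Ioi 0)] (fun h => h) := by
  set x₀ := gInv t
  set fY : ℝ → ℝ := fun y => deriv g y * fX (g y)
  have hg : Differentiable ℝ g := hg_smooth.differentiable (by norm_num)
  have hgx₀ : g x₀ = t := hgInv_right t ht
  have hY : Measurable fun ω => gInv (X ω) := hgInv_meas.comp hX
  have hlaw : ∀ Ψ : ℝ → ℝ, Measurable Ψ → ∫ ω, Ψ (gInv (X ω)) ∂μ = ∫ y, Ψ y * fY y :=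
    fun Ψ hΨ => integral_comp_leftInverse_eq_integral_mul_deriv_mul hX
      hfX_smooth.continuous.measurable hfX_nonneg hdens hg hg_mono (hg_range ▸ hXΩ) hgInv_left
      hgInv_meas hΨ
  have hfY : Integrable fY :=
    integrable_of_integral_eq_one (by simpa using (hlaw 1 measurable_const).symm)
  have hfYx₀ : ContinuousAt fY x₀ := ((hg_smooth.continuous_deriv (by norm_num)).mul
    (hfX_smooth.continuous.comp hg.continuous)).continuousAt
  have hS : survival μ X t = μ.real {ω | x₀ < gInv (X ω)} :=
    hgx₀ ▸ survival_eq_measureReal_lt hg_mono (hXΩ.mono fun ω => hgInv_right _) x₀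
  have hγ := tendsto_integral_inv_mul_kerV_mul_kerW_comp_div_mul x₀ hK_nonneg hK_one hK_mom2
    hfY hfYx₀ hK_symm
  rw [show (∫ u, kerV K u * kerW K u) * fY x₀
      = deriv g x₀ * (fX t * ∫ y, kerV K y * kerW K y) by simp only [fY, hgx₀]; ring] at hγ
  simp only [mul_assoc]
  refine isLittleO_sub_sq_sub_of_tendsto (fun h hh => ?_) (fun h hh => ?_)
    (tendsto_integral_inv_mul_kerD_comp_div_mul x₀ hK_nonneg hK_one hK_mom2 hfY hfYx₀ hK_symm) hγ
  · simp only [one_div_mul_integral_Ioi_comp_sub_div K x₀ _ hh, hS]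
    exact integral_kerV_comp_sub_div hK_nonneg hK_one hY hlaw hh
  · simp only [one_div_mul_integral_Ioi_comp_sub_div K x₀ _ hh]
    exact integral_kerV_sq_comp_sub_div hK_nonneg hK_one hY hlaw hh

/-- Variance expansion of the first proposed survival function estimator:
with `V_{1,h}(x,y) = (1/h) ∫_x^∞ K((z−y)/h) dz`, as `h → 0⁺`,
`n·Var[S̃_{X,1}(t)] = E[V_{1,h}(g⁻¹t, g⁻¹X)²] − (E[V_{1,h}(g⁻¹t, g⁻¹X)])²`
equals `S_X(t) F_X(t) − h g′(g⁻¹t) f_X(t) ∫ V(y) W(y) dy + o(h)`. -/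
theorem var_survival_estimator_one
    {α : Type*} [MeasurableSpace α] (μ : Measure α) [IsProbabilityMeasure μ]
    -- C1: the kernel
    (K : ℝ → ℝ) (hK_cont : Continuous K) (hK_nonneg : ∀ x, 0 ≤ K x)
    (hK_symm : ∀ x, K (-x) = K x) (hK_one : (∫ x, K x) = 1)
    (hK_mom2 : Integrable (fun x => x ^ 2 * K x))
    -- C3, C4: the transformation
    (Ω : Set ℝ) (hΩ : Set.OrdConnected Ω)
    (g gInv fX : ℝ → ℝ)
    (hg_smooth : ContDiff ℝ 2 g) (hg_mono : StrictMono g)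
    (hg_range : Set.range g = Ω)
    (hgInv_left : Function.LeftInverse gInv g)
    (hgInv_right : ∀ s ∈ Ω, g (gInv s) = s)
    (hgInv_meas : Measurable gInv)
    -- the random variable and its density
    (X : α → ℝ) (hX : Measurable X) (hXΩ : ∀ᵐ ω ∂μ, X ω ∈ Ω)
    (hfX_smooth : ContDiff ℝ 2 fX) (hfX_nonneg : ∀ x, 0 ≤ fX x)
    (hdens : μ.map X = volume.withDensity (fun x => ENNReal.ofReal (fX x)))
    -- C4: the density f_Y(y) = g′(y) f_X(g(y)) of Y = g⁻¹(X) is twice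
    -- continuously differentiable with bounded second derivative
    (hfY_smooth : ContDiff ℝ 2 (fun y => deriv g y * fX (g y)))
    (hfY_bdd : ∃ C : ℝ, ∀ y,
      |deriv (deriv (fun z => deriv g z * fX (g z))) y| ≤ C)
    -- C5
    (hgK : ∃ ε > (0 : ℝ), ∀ u : ℝ, |u| < ε →
      Integrable (fun x => deriv g (u * x) * K x))
    (hgV : ∃ ε > (0 : ℝ), ∀ u : ℝ, |u| < ε →
      Integrable (fun x => deriv g (u * x) * kerV K x))
    -- C6: moments
    (hM1 : Integrable X μ) (hM2 : Integrable (fun ω => (X ω) ^ 2) μ)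
    (hM3 : Integrable (fun ω => (X ω) ^ 3) μ)
    -- the point of evaluation
    (t : ℝ) (ht : t ∈ Ω)
    :
    (fun h : ℝ =>
        (∫ ω, ((1 / h) *
            ∫ z in Set.Ioi (gInv t), K ((z - gInv (X ω)) / h)) ^ 2 ∂μ)
          - (∫ ω, (1 / h) *
              (∫ z in Set.Ioi (gInv t), K ((z - gInv (X ω)) / h)) ∂μ) ^ 2
          - (survival μ X t * (1 - survival μ X t)
              - h * deriv g (gInv t) * fX t * ∫ y, kerV K y * kerW K y))
      =o[nhdsWithin (0 : ℝ) (Set.Ioi 0)] (fun h => h) :=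
  var_survival_estimator_one_general μ K hK_nonneg hK_symm hK_one hK_mom2 Ω g gInv fX hg_smooth
    hg_mono hg_range hgInv_left hgInv_right hgInv_meas X hX hXΩ hfX_smooth hfX_nonneg hdens t ht
end

section
/- Fix t ∈ Ω. Under conditions C1–C6, the expectation of the second proposed survival function estimator, E[S̃_{X,2}(t)] = E[V((g⁻¹(t) − g⁻¹(X))/h)], satisfies, as h → 0⁺: E[S̃_{X,2}(t)] − S_X(t) = −(h²/2) b₁(t) ∫_{−∞}^{∞} y² K(y) dy + o(h²), where b₁(t) = g″(g⁻¹(t)) f_X(t) + (g′(g⁻¹(t)))² f_X′(t). -/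
open MeasureTheory Filter Asymptotics

/-!
Write `Y = g⁻¹ X` and `y₀ = g⁻¹ t`. Since `g` is increasing, `S_Y(c) = S_X(g c)`, so `S_Y` is
differentiable with `S_Y' = -f_Y`, `f_Y = g' · (f_X ∘ g)`, and `f_Y'(y₀) = b₁(t)`. Writing `V` as
an integral of `K` and applying Fubini, `E[V((y₀ - Y)/h)] = ∫ K(u) S_Y(y₀ - h u) du`. Expanding
`S_Y(y₀ - s)` to second order at `s = 0`, the constant term gives `S_Y(y₀) = S_X(t)`, the linear
term vanishes because `K` is even, and the quadratic term gives `-(h²/2) b₁(t) ∫ u² K(u) du`.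
The Taylor remainder is `o(s²)` at `0` and, `S_Y` being bounded, `O(s²)` globally, so dominated
convergence shows that its `K`-average at scale `h` is `o(h²)`.
-/

open scoped Topology

theorem isLittleO_taylor_two {f f' : ℝ → ℝ} {x f'' : ℝ}
    (hf : ∀ y, HasDerivAt f (f' y) y) (hf' : HasDerivAt f' f'' x) :
    (fun s => f (x + s) - f x - s * f' x - s ^ 2 / 2 * f'') =o[𝓝 0] fun s => s ^ 2 := by
  have hderiv : ∀ s, HasDerivAt (fun s => f (x + s) - f x - s * f' x - s ^ 2 / 2 * f'')
      (f' (x + s) - f' x - s * f'') s := by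
    intro s
    have h1 := ((hf (x + s)).comp_const_add x s).sub_const (f x)
    have h2 := h1.sub ((hasDerivAt_id' s).mul_const (f' x))
    have h3 := h2.sub (((hasDerivAt_pow 2 s).div_const 2).mul_const f'')
    exact h3.congr_deriv (by ring)
  -- The remainder has derivative `o(s)` at `0`; the mean value theorem on `[0, s]` integrates it.
  have hsmall := hasDerivAt_iff_isLittleO_nhds_zero.1 hf'
  rw [isLittleO_iff] at hsmall ⊢
  intro ε hε
  obtain ⟨δ, hδ, hball⟩ := Metric.eventually_nhds_iff_ball.1 (hsmall hε)
  filter_upwards [Metric.ball_mem_nhds 0 hδ] with s hs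
  have hbound : ∀ τ ∈ Metric.closedBall (0 : ℝ) ‖s‖, ‖f' (x + τ) - f' x - τ * f''‖ ≤ ε * ‖s‖ := by
    intro τ hτ
    have hτs : ‖τ‖ ≤ ‖s‖ := by simpa using hτ
    have := hball τ (Metric.closedBall_subset_ball (by simpa using hs) hτ)
    rw [smul_eq_mul] at this
    exact this.trans (by gcongr)
  have hmvt := (convex_closedBall (0 : ℝ) ‖s‖).norm_image_sub_le_of_norm_hasDerivWithin_le
    (fun τ _ => (hderiv τ).hasDerivWithinAt) hbound
    (Metric.mem_closedBall_self (norm_nonneg s)) (y := s) (by simp)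
  simpa [Real.norm_eq_abs, pow_two, mul_assoc] using hmvt

theorem exists_abs_le_mul_sq_of_isLittleO {R : ℝ → ℝ} (hR : R =o[𝓝 0] fun s => s ^ 2)
    {a b c : ℝ} (hglob : ∀ s, |R s| ≤ a + b * |s| + c * s ^ 2) :
    ∃ D, ∀ s, |R s| ≤ D * s ^ 2 := by
  obtain ⟨δ, hδ, hnear⟩ := Metric.eventually_nhds_iff_ball.1 (hR.def one_pos)
  refine ⟨max 1 (|a| / δ ^ 2 + |b| / δ + |c|), fun s => ?_⟩
  rcases lt_or_ge |s| δ with hs | hs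
  · have := hnear s (by simpa using hs)
    simp only [Real.norm_eq_abs, one_mul, abs_pow, sq_abs] at this
    exact this.trans (le_mul_of_one_le_left (sq_nonneg s) (le_max_left _ _))
  · have hδs : δ ^ 2 ≤ s ^ 2 := by rw [← sq_abs s]; gcongr
    have ha : a ≤ |a| / δ ^ 2 * s ^ 2 := by
      rw [div_mul_eq_mul_div, le_div_iff₀ (by positivity)]
      nlinarith [le_abs_self a, abs_nonneg a]
    have hb : b * |s| ≤ |b| / δ * s ^ 2 := by
      rw [div_mul_eq_mul_div, le_div_iff₀ hδ, ← sq_abs s]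
      nlinarith [mul_le_mul_of_nonneg_left hs (mul_nonneg (abs_nonneg b) (abs_nonneg s)),
        mul_le_mul_of_nonneg_right (le_abs_self b) (mul_nonneg (abs_nonneg s) hδ.le)]
    have hc : c * s ^ 2 ≤ |c| * s ^ 2 := by gcongr; exact le_abs_self c
    calc |R s| ≤ a + b * |s| + c * s ^ 2 := hglob s
      _ ≤ (|a| / δ ^ 2 + |b| / δ + |c|) * s ^ 2 := by linarith
      _ ≤ _ := by gcongr; exact le_max_right _ _

theorem isLittleO_integral_mul_comp_mul {K R : ℝ → ℝ}
    (hK : Integrable fun u => u ^ 2 * K u) (hR : Measurable R)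
    (hRo : R =o[𝓝 0] fun s => s ^ 2) {D : ℝ} (hD : ∀ s, |R s| ≤ D * s ^ 2) :
    (fun h => ∫ u, K u * R (h * u)) =o[𝓝 0] fun h => h ^ 2 := by
  have hR0 : R 0 = 0 := abs_nonpos_iff.1 (by simpa using hD 0)
  have hD0 : 0 ≤ D := by simpa using (abs_nonneg _).trans (hD 1)
  set φ : ℝ → ℝ := fun s => R s / s ^ 2
  have hφ_bound : ∀ s, ‖φ s‖ ≤ D := by
    intro s
    rcases eq_or_ne s 0 with rfl | hs
    · simpa [φ] using hD0
    · rw [Real.norm_eq_abs, abs_div, abs_of_nonneg (sq_nonneg s), div_le_iff₀ (by positivity)]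
      exact hD s
  -- `R s = s ^ 2 * φ s` also at `s = 0`, where `φ 0 = R 0 / 0 = 0`.
  have hrepr : ∀ h, (∫ u, K u * R (h * u)) / h ^ 2 = ∫ u, u ^ 2 * K u * φ (h * u) := by
    intro h
    rw [← integral_div]
    congr 1 with u
    rcases eq_or_ne (h * u) 0 with hu | hu
    · simp [φ, hu, hR0]
    · have hh : h ≠ 0 := left_ne_zero_of_mul hu
      have hu' : u ≠ 0 := right_ne_zero_of_mul hu
      simp only [φ]
      field_simp
  rw [isLittleO_iff_tendsto' (Eventually.of_forall fun h hh => by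
    simp [pow_eq_zero_iff two_ne_zero |>.1 hh, hR0])]
  simp_rw [hrepr]
  have hlim := tendsto_integral_filter_of_dominated_convergence (l := 𝓝 (0 : ℝ))
    (F := fun h u => u ^ 2 * K u * φ (h * u)) (f := fun _ => 0) (fun u => ‖u ^ 2 * K u‖ * D)
    (Eventually.of_forall fun h => hK.aestronglyMeasurable.mul
      ((hR.div (measurable_id.pow_const 2)).comp (measurable_const_mul h)).aestronglyMeasurable)
    (Eventually.of_forall fun h => Eventually.of_forall fun u => by
      rw [norm_mul]; exact mul_le_mul_of_nonneg_left (hφ_bound _) (norm_nonneg _))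
    (hK.norm.mul_const D)
    (Eventually.of_forall fun u => by
      have : Tendsto (fun h => φ (h * u)) (𝓝 0) (𝓝 0) :=
        hRo.tendsto_div_nhds_zero.comp
          ((continuous_mul_const u).tendsto' 0 0 (zero_mul u))
      simpa using this.const_mul (u ^ 2 * K u))
  simpa using hlim

theorem integrable_id_mul_of_integrable_sq_mul {K : ℝ → ℝ} (hK : Integrable K)
    (hK2 : Integrable fun u => u ^ 2 * K u) : Integrable fun u => u * K u := by
  refine (hK.norm.add hK2.norm).mono' (by fun_prop) (Eventually.of_forall fun u => ?_)
  simp only [Pi.add_apply, norm_mul, Real.norm_eq_abs, abs_pow, sq_abs]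
  nlinarith [mul_nonneg (abs_nonneg (K u)) (sq_nonneg (|u| - 1)), sq_abs u,
    mul_nonneg (abs_nonneg (K u)) (sq_nonneg u)]

theorem integral_id_mul_eq_zero_of_even {K : ℝ → ℝ} (hK_symm : ∀ x, K (-x) = K x) :
    ∫ u, u * K u = 0 := by
  have h := integral_neg_eq_self (fun u : ℝ => u * K u) volume
  simp only [hK_symm, neg_mul, integral_neg] at h
  linarith

theorem integral_mul_sub_quadratic {K : ℝ → ℝ} (hK_one : ∫ x, K x = 1)
    (hK_symm : ∀ x, K (-x) = K x) (hK_mom2 : Integrable fun x => x ^ 2 * K x) {F : ℝ → ℝ}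
    (hF : Integrable fun u => K u * F u) (a b c : ℝ) :
    ∫ u, K u * (F u - a - u * b + u ^ 2 * c) =
      (∫ u, K u * F u) - a + c * ∫ u, u ^ 2 * K u := by
  have hK : Integrable K := .of_integral_ne_zero (by rw [hK_one]; exact one_ne_zero)
  have hK1 := integrable_id_mul_of_integrable_sq_mul hK hK_mom2
  have hexpand : (fun u => K u * (F u - a - u * b + u ^ 2 * c)) =
      fun u => K u * F u - a * K u - b * (u * K u) + c * (u ^ 2 * K u) := by
    ext u; ring
  have hF0 : Integrable fun u => K u * F u - a * K u := hF.sub (hK.const_mul a)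
  have hF1 : Integrable fun u => K u * F u - a * K u - b * (u * K u) :=
    hF0.sub (hK1.const_mul b)
  rw [hexpand, integral_add hF1 (hK_mom2.const_mul c), integral_sub hF0 (hK1.const_mul b),
    integral_sub hF (hK.const_mul a), integral_const_mul, integral_const_mul, integral_const_mul,
    hK_one, integral_id_mul_eq_zero_of_even hK_symm]
  ring

theorem isLittleO_integral_kernel_mul_sub {K S S' : ℝ → ℝ} {x S'' M : ℝ}
    (hK_one : ∫ u, K u = 1) (hK_symm : ∀ u, K (-u) = K u)
    (hK_mom2 : Integrable fun u => u ^ 2 * K u) (hS : ∀ y, HasDerivAt S (S' y) y)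
    (hS' : HasDerivAt S' S'' x) (hS_bdd : ∀ y, |S y| ≤ M) :
    (fun h => (∫ u, K u * S (x - h * u)) - S x - h ^ 2 / 2 * S'' * ∫ u, u ^ 2 * K u)
      =o[𝓝 0] fun h => h ^ 2 := by
  set R := fun s => S (x - s) - S x + s * S' x - s ^ 2 / 2 * S''
  have hRo : R =o[𝓝 0] fun s => s ^ 2 := by
    refine ((isLittleO_taylor_two hS hS').comp_tendsto
      (continuous_neg.tendsto' 0 0 neg_zero)).congr (fun s => ?_) neg_sq
    simp only [Function.comp_apply, R, ← sub_eq_add_neg]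
    ring
  have hR_glob : ∀ s, |R s| ≤ 2 * M + |S' x| * |s| + |S''| / 2 * s ^ 2 := fun s => by
    have h1 := abs_sub (S (x - s) - S x + s * S' x) (s ^ 2 / 2 * S'')
    have h2 := abs_add_le (S (x - s) - S x) (s * S' x)
    have h3 := abs_sub (S (x - s)) (S x)
    simp only [abs_mul, abs_div, abs_two, abs_pow, sq_abs] at h1 h2 ⊢
    linarith [hS_bdd (x - s), hS_bdd x]
  obtain ⟨D, hD⟩ := exists_abs_le_mul_sq_of_isLittleO hRo hR_glob
  have hS_cont : Continuous S := continuous_iff_continuousAt.2 fun y => (hS y).continuousAt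
  have hR_meas : Measurable R := by fun_prop
  have hK : Integrable K := .of_integral_ne_zero (by rw [hK_one]; exact one_ne_zero)
  refine (isLittleO_integral_mul_comp_mul hK_mom2 hR_meas hRo hD).congr_left fun h => ?_
  have hF : Integrable fun u => K u * S (x - h * u) :=
    hK.mul_bdd (by fun_prop) (Eventually.of_forall fun u => hS_bdd _)
  calc ∫ u, K u * R (h * u)
      = ∫ u, K u * (S (x - h * u) - S x - u * (-(h * S' x)) + u ^ 2 * (-(h ^ 2 / 2 * S''))) := by
        congr 1 with u
        simp only [R]
        ring
    _ = _ := by rw [integral_mul_sub_quadratic hK_one hK_symm hK_mom2 hF]; ring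

theorem hasDerivAt_deriv_mul_comp {g f : ℝ → ℝ} {y : ℝ} (hg : DifferentiableAt ℝ g y)
    (hg' : DifferentiableAt ℝ (deriv g) y) (hf : DifferentiableAt ℝ f (g y)) :
    HasDerivAt (fun z => deriv g z * f (g z))
      (deriv (deriv g) y * f (g y) + deriv g y ^ 2 * deriv f (g y)) y := by
  have := hg'.hasDerivAt.mul (hf.hasDerivAt.comp y hg.hasDerivAt)
  exact this.congr_deriv (by rw [Function.comp_apply]; ring)

section Survival

variable {α : Type*} [MeasurableSpace α] {μ : Measure α} {X : α → ℝ}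

theorem abs_survival_le_one [IsProbabilityMeasure μ] (t : ℝ) : |survival μ X t| ≤ 1 := by
  rw [survival, ← measureReal_def, abs_of_nonneg measureReal_nonneg]
  exact measureReal_le_one

theorem survival_comp_of_strictMono {g gInv : ℝ → ℝ} (hg : StrictMono g)
    (hinv : ∀ᵐ ω ∂μ, g (gInv (X ω)) = X ω) (c : ℝ) :
    survival μ (fun ω => gInv (X ω)) c = survival μ X (g c) := by
  unfold survival
  congr 1
  refine measure_congr (hinv.mono fun ω hω => ?_)
  change (c < gInv (X ω)) = (g c < X ω)
  rw [← hg.lt_iff_lt, hω]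

variable {fX : ℝ → ℝ}

theorem survival_eq_integral_Ioi (hX : Measurable X) (hfX_meas : Measurable fX)
    (hfX_nonneg : ∀ x, 0 ≤ fX x)
    (hdens : μ.map X = volume.withDensity fun x => ENNReal.ofReal (fX x)) (t : ℝ) :
    survival μ X t = ∫ x in Set.Ioi t, fX x := by
  rw [survival, integral_eq_lintegral_of_nonneg_ae (Eventually.of_forall hfX_nonneg)
    hfX_meas.aestronglyMeasurable, ← withDensity_apply _ measurableSet_Ioi, ← hdens,
    Measure.map_apply hX measurableSet_Ioi]
  rfl

theorem integrable_density [IsFiniteMeasure μ] (hfX_meas : Measurable fX)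
    (hfX_nonneg : ∀ x, 0 ≤ fX x)
    (hdens : μ.map X = volume.withDensity fun x => ENNReal.ofReal (fX x)) : Integrable fX := by
  refine ⟨hfX_meas.aestronglyMeasurable, ?_⟩
  rw [hasFiniteIntegral_iff_ofReal (Eventually.of_forall hfX_nonneg),
    ← setLIntegral_univ, ← withDensity_apply _ MeasurableSet.univ, ← hdens]
  exact measure_lt_top _ _

theorem hasDerivAt_survival [IsFiniteMeasure μ] (hX : Measurable X) (hfX : Continuous fX)
    (hfX_nonneg : ∀ x, 0 ≤ fX x)
    (hdens : μ.map X = volume.withDensity fun x => ENNReal.ofReal (fX x)) (t : ℝ) :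
    HasDerivAt (survival μ X) (-fX t) t := by
  have hint := integrable_density hfX.measurable hfX_nonneg hdens
  have hsplit : ∀ c, survival μ X c =
      ((∫ x, fX x) - ∫ x in Set.Iic 0, fX x) - ∫ x in (0 : ℝ)..c, fX x := by
    intro c
    rw [survival_eq_integral_Ioi hX hfX.measurable hfX_nonneg hdens,
      ← intervalIntegral.integral_Iic_sub_Iic hint.integrableOn hint.integrableOn,
      ← intervalIntegral.integral_Iic_add_Ioi hint.integrableOn hint.integrableOn]
    ring
  rw [funext hsplit]
  exact (intervalIntegral.integral_hasDerivAt_right hint.intervalIntegrable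
    (hfX.stronglyMeasurableAtFilter _ _) hfX.continuousAt).const_sub _

theorem hasDerivAt_survival_comp_of_strictMono [IsFiniteMeasure μ] {g gInv : ℝ → ℝ} {g' c : ℝ}
    (hg_mono : StrictMono g) (hinv : ∀ᵐ ω ∂μ, g (gInv (X ω)) = X ω) (hX : Measurable X)
    (hfX : Continuous fX) (hfX_nonneg : ∀ x, 0 ≤ fX x)
    (hdens : μ.map X = volume.withDensity fun x => ENNReal.ofReal (fX x))
    (hg : HasDerivAt g g' c) :
    HasDerivAt (survival μ fun ω => gInv (X ω)) (-(g' * fX (g c))) c := by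
  rw [funext (survival_comp_of_strictMono hg_mono hinv)]
  exact ((hasDerivAt_survival hX hfX hfX_nonneg hdens (g c)).comp c hg).congr_deriv (by ring)

end Survival

theorem integral_kerV_div_eq_integral_mul_survival {α : Type*} [MeasurableSpace α]
    {μ : Measure α} [IsFiniteMeasure μ] {K : ℝ → ℝ} (hK : Integrable K) {Y : α → ℝ}
    (hY : Measurable Y) {h : ℝ} (hh : 0 < h) (c : ℝ) :
    ∫ ω, kerV K ((c - Y ω) / h) ∂μ = ∫ u, K u * survival μ Y (c - h * u) := by
  set S := {p : α × ℝ | c - h * p.2 < Y p.1}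
  have hS : MeasurableSet S :=
    measurableSet_lt (measurable_const.sub (measurable_const.mul measurable_snd))
      (hY.comp measurable_fst)
  have hmem : ∀ ω u, (ω, u) ∈ S ↔ (c - Y ω) / h < u := fun ω u => by
    rw [div_lt_iff₀ hh]; simp only [S, Set.mem_ofPred_eq]; constructor <;> intro <;> linarith
  calc ∫ ω, kerV K ((c - Y ω) / h) ∂μ
      = ∫ ω, ∫ u, S.indicator (fun p => K p.2) (ω, u) ∂volume ∂μ := by
        congr 1 with ω
        rw [kerV, ← integral_indicator measurableSet_Ioi]
        congr 1 with u
        simp only [Set.indicator_apply, hmem, Set.mem_Ioi]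
    _ = ∫ u, ∫ ω, S.indicator (fun p => K p.2) (ω, u) ∂μ :=
        integral_integral_swap ((hK.comp_snd μ).indicator hS)
    _ = ∫ u, K u * survival μ Y (c - h * u) := by
        congr 1 with u
        have hset : MeasurableSet {ω | c - h * u < Y ω} := hY measurableSet_Ioi
        rw [mul_comm, survival, ← measureReal_def, ← smul_eq_mul,
          ← integral_indicator_const (K u) hset]
        rfl

theorem bias_survival_estimator_two_general
    {α : Type*} [MeasurableSpace α] (μ : Measure α) [IsProbabilityMeasure μ]
    -- C1: the kernel
    (K : ℝ → ℝ)
    (hK_symm : ∀ x, K (-x) = K x) (hK_one : (∫ x, K x) = 1)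
    (hK_mom2 : Integrable (fun x => x ^ 2 * K x))
    -- C3, C4: the transformation
    (Ω : Set ℝ)
    (g gInv fX : ℝ → ℝ)
    (hg_smooth : ContDiff ℝ 2 g) (hg_mono : StrictMono g)
    (hgInv_right : ∀ s ∈ Ω, g (gInv s) = s)
    (hgInv_meas : Measurable gInv)
    -- the random variable and its density
    (X : α → ℝ) (hX : Measurable X) (hXΩ : ∀ᵐ ω ∂μ, X ω ∈ Ω)
    (hfX_smooth : ContDiff ℝ 2 fX) (hfX_nonneg : ∀ x, 0 ≤ fX x)
    (hdens : μ.map X = volume.withDensity (fun x => ENNReal.ofReal (fX x)))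
    -- the point of evaluation
    (t : ℝ) (ht : t ∈ Ω)
    :
    (fun h : ℝ =>
        (∫ ω, kerV K ((gInv t - gInv (X ω)) / h) ∂μ)
          - survival μ X t
          + h ^ 2 / 2 *
              (deriv (deriv g) (gInv t) * fX t +
                (deriv g (gInv t)) ^ 2 * deriv fX t) *
              ∫ y, y ^ 2 * K y)
      =o[nhdsWithin (0 : ℝ) (Set.Ioi 0)] (fun h => h ^ 2) := by
  set y0 := gInv t
  have hgy0 : g y0 = t := hgInv_right t ht
  have hinv : ∀ᵐ ω ∂μ, g (gInv (X ω)) = X ω := hXΩ.mono fun ω hω => hgInv_right _ hω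
  have hg_diff : Differentiable ℝ g := hg_smooth.differentiable (by norm_num)
  have hSY_deriv (c : ℝ) := hasDerivAt_survival_comp_of_strictMono hg_mono hinv hX
    hfX_smooth.continuous hfX_nonneg hdens (hg_diff c).hasDerivAt
  have hfY_deriv := (hasDerivAt_deriv_mul_comp (hg_diff y0)
    (hg_smooth.differentiable_deriv_two y0) (hfX_smooth.differentiable (by norm_num) (g y0))).neg
  rw [hgy0] at hfY_deriv
  refine ((isLittleO_integral_kernel_mul_sub hK_one hK_symm hK_mom2 hSY_deriv hfY_deriv
    abs_survival_le_one).mono nhdsWithin_le_nhds).congr' ?_ EventuallyEq.rfl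
  filter_upwards [self_mem_nhdsWithin] with h hh
  rw [integral_kerV_div_eq_integral_mul_survival (.of_integral_ne_zero (by simp [hK_one]))
    (Y := fun ω => gInv (X ω)) (hgInv_meas.comp hX) hh, ← hgy0,
    ← survival_comp_of_strictMono hg_mono hinv]
  ring

/-- Bias expansion of the second proposed survival function estimator
`S̃_{X,2}(t)`:  as `h → 0⁺`,
`E[V((g⁻¹t − g⁻¹X)/h)] − S_X(t) = −(h²/2) b₁(t) ∫ y² K(y) dy + o(h²)`, where
`b₁(t) = g″(g⁻¹ t) f_X(t) + (g′(g⁻¹ t))² f_X′(t)`. -/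
theorem bias_survival_estimator_two
    {α : Type*} [MeasurableSpace α] (μ : Measure α) [IsProbabilityMeasure μ]
    -- C1: the kernel
    (K : ℝ → ℝ) (hK_cont : Continuous K) (hK_nonneg : ∀ x, 0 ≤ K x)
    (hK_symm : ∀ x, K (-x) = K x) (hK_one : (∫ x, K x) = 1)
    (hK_mom2 : Integrable (fun x => x ^ 2 * K x))
    -- C3, C4: the transformation
    (Ω : Set ℝ) (hΩ : Set.OrdConnected Ω)
    (g gInv fX : ℝ → ℝ)
    (hg_smooth : ContDiff ℝ 2 g) (hg_mono : StrictMono g)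
    (hg_range : Set.range g = Ω)
    (hgInv_left : Function.LeftInverse gInv g)
    (hgInv_right : ∀ s ∈ Ω, g (gInv s) = s)
    (hgInv_meas : Measurable gInv)
    -- the random variable and its density
    (X : α → ℝ) (hX : Measurable X) (hXΩ : ∀ᵐ ω ∂μ, X ω ∈ Ω)
    (hfX_smooth : ContDiff ℝ 2 fX) (hfX_nonneg : ∀ x, 0 ≤ fX x)
    (hdens : μ.map X = volume.withDensity (fun x => ENNReal.ofReal (fX x)))
    -- C4: the density f_Y(y) = g′(y) f_X(g(y)) of Y = g⁻¹(X) is twice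
    -- continuously differentiable with bounded second derivative
    (hfY_smooth : ContDiff ℝ 2 (fun y => deriv g y * fX (g y)))
    (hfY_bdd : ∃ C : ℝ, ∀ y,
      |deriv (deriv (fun z => deriv g z * fX (g z))) y| ≤ C)
    -- C5
    (hgK : ∃ ε > (0 : ℝ), ∀ u : ℝ, |u| < ε →
      Integrable (fun x => deriv g (u * x) * K x))
    (hgV : ∃ ε > (0 : ℝ), ∀ u : ℝ, |u| < ε →
      Integrable (fun x => deriv g (u * x) * kerV K x))
    -- C6: moments
    (hM1 : Integrable X μ) (hM2 : Integrable (fun ω => (X ω) ^ 2) μ)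
    (hM3 : Integrable (fun ω => (X ω) ^ 3) μ)
    -- the point of evaluation
    (t : ℝ) (ht : t ∈ Ω)
    :
    (fun h : ℝ =>
        (∫ ω, kerV K ((gInv t - gInv (X ω)) / h) ∂μ)
          - survival μ X t
          + h ^ 2 / 2 *
              (deriv (deriv g) (gInv t) * fX t +
                (deriv g (gInv t)) ^ 2 * deriv fX t) *
              ∫ y, y ^ 2 * K y)
      =o[nhdsWithin (0 : ℝ) (Set.Ioi 0)] (fun h => h ^ 2) :=
  bias_survival_estimator_two_general μ K hK_symm hK_one hK_mom2 Ω g gInv fX hg_smooth hg_mono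
    hgInv_right hgInv_meas X hX hXΩ hfX_smooth hfX_nonneg hdens t ht
end
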